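/- arXiv:2406.12083 — 2 statements merged into one kernel-verified Lean document; each statement's English description precedes it below -/
import Mathlib

section
/- Define f : ℕ × ℕ × ℕ → ℕ by f(p, 0, q') = 2^{p q'}, f(p, p', 0) = 1 for p' ≥ 1, and f(p, p', q') = f(p, p'−1, q') + 2^{p−p'} · f(p, p', q'−1) for p', q' ≥ 1 (assuming p' ≤ p). Then for all p' ≤ p and all q', f(p, p', q') = 2^{(p−p') q'} · ∏_{i=1}^{p'}(2^{q'+i} − 1) / ∏_{i=1}^{p'}(2^i − 1). -/
/-- `f p p' q'` counts ways to place `p'` remaining X nodes and `q'` remaining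
Z nodes (out of a total of `p` X nodes), where each new Z node may connect
arbitrarily to already-placed X nodes. -/
def f (p : ℕ) : ℕ → ℕ → ℕ
  | 0, q' => 2 ^ (p * q')
  | _ + 1, 0 => 1
  | p' + 1, q' + 1 => f p p' (q' + 1) + 2 ^ (p - (p' + 1)) * f p (p' + 1) q'

lemma prodpos (n : ℕ) (g : ℕ → ℕ) : 0 < ∏ i ∈ Finset.range n, ((2:ℚ) ^ (g i + 1) - 1) := by
  refine Finset.prod_pos fun i _ => ?_
  have : (1:ℚ) < 2 ^ (g i + 1) := one_lt_pow₀ one_lt_two (by omega)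
  linarith

/-- For all `p' ≤ p` and all `q'`,
`f(p, p', q') = 2^{(p−p') q'} · ∏_{i=1}^{p'}(2^{q'+i} − 1) / ∏_{i=1}^{p'}(2^i − 1)`. -/
theorem stmt2 (p p' q' : ℕ) (h : p' ≤ p) :
    (f p p' q' : ℚ) =
      2 ^ ((p - p') * q') *
        (∏ i ∈ Finset.range p', ((2 : ℚ) ^ (q' + i + 1) - 1)) /
        (∏ i ∈ Finset.range p', ((2 : ℚ) ^ (i + 1) - 1)) := by
  induction p' generalizing q' with
  | zero => simp [f]
  | succ p' ih =>
    have hB : (0:ℚ) < ∏ i ∈ Finset.range p', ((2:ℚ) ^ (i + 1) - 1) := prodpos p' id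
    have hD : ((2:ℚ) ^ (p' + 1) - 1) ≠ 0 := by
      have : (1:ℚ) < 2 ^ (p' + 1) := one_lt_pow₀ one_lt_two (by omega)
      linarith
    induction q' with
    | zero =>
      simp only [f, Nat.mul_zero, pow_zero, Nat.zero_add, Nat.cast_one, one_mul]
      rw [div_self]
      exact ne_of_gt (Finset.prod_pos fun i _ => by
        have : (1:ℚ) < 2 ^ (i + 1) := one_lt_pow₀ one_lt_two (by omega)
        linarith)
    | succ q' ihq =>
      simp only [f]
      push_cast
      rw [ih (q'+1) (by omega), ihq]
      have hk : p - p' = (p - (p'+1)) + 1 := by omega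
      set k := p - (p'+1) with hkdef
      set A := ∏ i ∈ Finset.range p', ((2:ℚ) ^ (q' + i + 2) - 1) with hAdef
      set B := ∏ i ∈ Finset.range p', ((2:ℚ) ^ (i + 1) - 1) with hBdef
      have e1 : ∏ i ∈ Finset.range p', ((2:ℚ) ^ (q' + 1 + i + 1) - 1) = A := by
        apply Finset.prod_congr rfl; intro i _; congr 2; omega
      have e2 : ∏ i ∈ Finset.range (p'+1), ((2:ℚ) ^ (q' + i + 1) - 1)
          = A * ((2:ℚ) ^ (q' + 1) - 1) := by
        rw [Finset.prod_range_succ']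
        congr 1
      have e3 : ∏ i ∈ Finset.range (p'+1), ((2:ℚ) ^ (i + 1) - 1)
          = B * ((2:ℚ) ^ (p' + 1) - 1) := Finset.prod_range_succ _ _
      have e4 : ∏ i ∈ Finset.range (p'+1), ((2:ℚ) ^ (q' + 1 + i + 1) - 1)
          = A * ((2:ℚ) ^ (q' + 1 + p' + 1) - 1) := by
        rw [Finset.prod_range_succ, e1]
      rw [e1, e2, e3, e4, hk]
      have hApos : (0:ℚ) < A := prodpos p' (fun i => q' + i + 1)
      have hlast : ((2:ℚ) ^ (q' + 1 + p' + 1) - 1)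
          = 2^(q'+1) * (2^(p'+1) - 1) + (2^(q'+1) - 1) := by
        rw [show q' + 1 + p' + 1 = (q'+1) + (p'+1) by ring, pow_add]
        ring
      field_simp
      rw [hlast]
      ring
end

section
/- Local complementation preserves connected components: if G' is obtained from a simple graph G by local complementation at a vertex v, then two vertices lie in the same connected component of G if and only if they lie in the same connected component of G'. -/
/-- Local complementation of a simple graph `G` at a vertex `v`: toggles all
edges between pairs of distinct neighbors of `v`; all other adjacencies are
unchanged. -/
def localComp {V : Type*} (G : SimpleGraph V) (v : V) : SimpleGraph V where
  Adj a b := a ≠ b ∧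
    (((G.Adj v a ∧ G.Adj v b) ∧ ¬ G.Adj a b) ∨ (¬(G.Adj v a ∧ G.Adj v b) ∧ G.Adj a b))
  symm := by
    constructor
    intro a b ⟨hab, h⟩
    refine ⟨hab.symm, ?_⟩
    rcases h with ⟨⟨h1, h2⟩, h3⟩ | ⟨h1, h2⟩
    · exact Or.inl ⟨⟨h2, h1⟩, fun h => h3 h.symm⟩
    · exact Or.inr ⟨fun h => h1 ⟨h.2, h.1⟩, h2.symm⟩
  loopless := ⟨fun a h => h.1 rfl⟩

/-!
An edge `xy` of `G` survives local complementation at `v` unless `x` and `y` are both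
neighbours of `v`; in that case `x - v - y` is a path afterwards, because the neighbourhood
of `v` itself is untouched. Hence reachability in `G` implies reachability in `localComp G v`,
and the converse follows because local complementation at `v` is an involution.
-/

namespace SimpleGraph

variable {V : Type*}

theorem reachable_le_of_adj_reachable {G H : SimpleGraph V}
    (h : ∀ x y, G.Adj x y → H.Reachable x y) : G.Reachable ≤ H.Reachable := by
  intro a b hab
  rw [reachable_iff_reflTransGen] at hab ⊢
  exact Relation.reflTransGen_closed (fun x y hxy ↦ (reachable_iff_reflTransGen x y).1 (h x y hxy))
    a b hab

end SimpleGraph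

section LocalComplementation

variable {V : Type*} (G : SimpleGraph V) (v : V)

theorem localComp_adj {x y : V} :
    (localComp G v).Adj x y ↔ x ≠ y ∧
      (((G.Adj v x ∧ G.Adj v y) ∧ ¬ G.Adj x y) ∨ (¬(G.Adj v x ∧ G.Adj v y) ∧ G.Adj x y)) :=
  Iff.rfl

theorem localComp_adj_left {x : V} : (localComp G v).Adj v x ↔ G.Adj v x := by
  simp only [localComp_adj, G.irrefl, false_and, not_false_eq_true, true_and, false_or]
  exact ⟨And.right, fun h ↦ ⟨h.ne, h⟩⟩

theorem localComp_localComp : localComp (localComp G v) v = G := by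
  ext x y
  rw [localComp_adj, localComp_adj_left, localComp_adj_left, localComp_adj]
  refine ⟨fun h ↦ by tauto, fun h ↦ ⟨h.ne, ?_⟩⟩
  have := h.ne
  tauto

theorem reachable_le_localComp_reachable : G.Reachable ≤ (localComp G v).Reachable := by
  refine SimpleGraph.reachable_le_of_adj_reachable fun x y hxy ↦ ?_
  by_cases hv : G.Adj v x ∧ G.Adj v y
  · exact ((localComp_adj_left G v).2 hv.1).symm.reachable.trans
      ((localComp_adj_left G v).2 hv.2).reachable
  · exact ((localComp_adj G v).2 ⟨hxy.ne, Or.inr ⟨hv, hxy⟩⟩).reachable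

end LocalComplementation

/-- Local complementation preserves connected components: two vertices are
connected by a walk in `localComp G v` iff they are in `G`. -/
theorem stmt11 {V : Type*} (G : SimpleGraph V) (v : V) (a b : V) :
    (localComp G v).Reachable a b ↔ G.Reachable a b := by
  refine ⟨fun h ↦ ?_, fun h ↦ reachable_le_localComp_reachable G v a b h⟩
  simpa only [localComp_localComp] using reachable_le_localComp_reachable (localComp G v) v a b h
end
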